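/- Suppose there exists a doubly even self-dual binary code of length n and minimum distance d ≥ 2. Then there exists a CSS stabilizer code on n−1 qubits, with X- and Z-stabilizer groups both generated by the dual C^⊥ of the punctured code, that is a valid stabilizer code (C^⊥ ⊆ C ensures commutativity of X-type and Z-type stabilizers), encodes exactly one logical qubit, and has minimum distance at least d−1. -/

import Mathlib

/-- The dual of a binary linear code under the standard F₂ inner product. -/
def dualCode {n : ℕ} (C : Submodule (ZMod 2) (Fin n → ZMod 2)) :
    Submodule (ZMod 2) (Fin n → ZMod 2) where
  carrier := {x | ∀ c ∈ C, ∑ i, x i * c i = 0}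
  add_mem' := by
    intro a b ha hb c hc
    simp only [Set.mem_setOf_eq, Pi.add_apply, add_mul, Finset.sum_add_distrib] at *
    rw [ha c hc, hb c hc, add_zero]
  zero_mem' := by intro c hc; simp
  smul_mem' := by
    intro r a ha c hc
    simp only [Set.mem_setOf_eq, Pi.smul_apply, smul_eq_mul, mul_assoc,
      ← Finset.mul_sum] at *
    rw [ha c hc, mul_zero]

/-- Puncturing at the last coordinate, as a linear map. -/
def punctureMap (n : ℕ) : (Fin (n + 1) → ZMod 2) →ₗ[ZMod 2] (Fin n → ZMod 2) :=
  LinearMap.funLeft (ZMod 2) (ZMod 2) Fin.castSucc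

/-! Puncturing a self-dual code `C` of minimum distance at least `2` at the last coordinate
loses no dimension (a nonzero codeword killed by it would have weight one), while the dual of
the punctured code is the punctured *shortened* code `{c ∈ C | c last = 0}`, which is contained
in the punctured code and has codimension one in it, because some codeword of `C` is nonzero at
the last coordinate (otherwise the last unit vector, of weight one, would lie in `C⊥ = C`).
Puncturing lowers weights by at most one. -/

theorem hammingNorm_le_hammingNorm_comp_castSucc_add_one {β : Type*} [Zero β] [DecidableEq β]
    {n : ℕ} (v : Fin (n + 1) → β) :
    hammingNorm v ≤ hammingNorm (v ∘ Fin.castSucc) + 1 := by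
  simp only [hammingNorm, Finset.card_filter, Fin.sum_univ_castSucc, Function.comp_apply]
  gcongr
  split_ifs <;> simp

theorem punctureMap_apply {n : ℕ} (v : Fin (n + 1) → ZMod 2) (i : Fin n) :
    punctureMap n v i = v i.castSucc := rfl

theorem hammingNorm_le_hammingNorm_punctureMap_add_one {n : ℕ} (v : Fin (n + 1) → ZMod 2) :
    hammingNorm v ≤ hammingNorm (punctureMap n v) + 1 :=
  hammingNorm_le_hammingNorm_comp_castSucc_add_one v

theorem disjoint_ker_punctureMap {n : ℕ} {C : Submodule (ZMod 2) (Fin (n + 1) → ZMod 2)}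
    (hC : ∀ c ∈ C, c ≠ 0 → 2 ≤ hammingNorm c) :
    Disjoint C (LinearMap.ker (punctureMap n)) := by
  rw [Submodule.disjoint_def]
  intro v hvC hvker
  by_contra hv
  have := hammingNorm_le_hammingNorm_punctureMap_add_one v
  rw [LinearMap.mem_ker.mp hvker, hammingNorm_zero] at this
  have := hC v hvC hv
  omega

theorem single_mem_dualCode_iff {n : ℕ} (C : Submodule (ZMod 2) (Fin n → ZMod 2)) (i : Fin n) :
    Pi.single i 1 ∈ dualCode C ↔ ∀ c ∈ C, c i = 0 := by
  change (∀ c ∈ C, _) ↔ _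
  simp [Pi.single_apply]

theorem sum_mul_eq_sum_punctureMap_mul {n : ℕ} {x : Fin (n + 1) → ZMod 2}
    (hx : x (Fin.last n) = 0) (c : Fin (n + 1) → ZMod 2) :
    ∑ i, x i * c i = ∑ i, punctureMap n x i * punctureMap n c i := by
  simp [Fin.sum_univ_castSucc, hx, punctureMap_apply]

theorem dualCode_map_punctureMap {n : ℕ} (C : Submodule (ZMod 2) (Fin (n + 1) → ZMod 2)) :
    dualCode (C.map (punctureMap n)) =
      (dualCode C ⊓ LinearMap.ker (LinearMap.proj (Fin.last n))).map (punctureMap n) := by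
  apply le_antisymm
  · intro x hx
    set y : Fin (n + 1) → ZMod 2 := Fin.snoc x 0
    have hlast : y (Fin.last n) = 0 := Fin.snoc_last _ _
    have hpunct : punctureMap n y = x := funext fun i => by simp [y, punctureMap_apply]
    refine ⟨y, ⟨fun c hc => ?_, hlast⟩, hpunct⟩
    rw [sum_mul_eq_sum_punctureMap_mul hlast, hpunct]
    exact hx _ (Submodule.mem_map_of_mem hc)
  · rintro _ ⟨x, ⟨hxdual, hxlast⟩, rfl⟩ _ ⟨c, hc, rfl⟩
    rw [← sum_mul_eq_sum_punctureMap_mul hxlast]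
    exact hxdual c hc

section FiniteDimensional

variable {K V W : Type*} [Field K] [AddCommGroup V] [Module K V] [AddCommGroup W] [Module K W]

theorem Submodule.finrank_map_eq_of_disjoint_ker {S : Submodule K V} {f : V →ₗ[K] W}
    (h : Disjoint S (LinearMap.ker f)) : Module.finrank K (S.map f) = Module.finrank K S := by
  rw [← LinearMap.range_domRestrict]
  exact LinearMap.finrank_range_of_inj (LinearMap.injective_domRestrict_iff.mpr h)

theorem Submodule.finrank_inf_ker_add_one [FiniteDimensional K V] {S : Submodule K V}
    {f : V →ₗ[K] K} {v : V} (hv : v ∈ S) (hfv : f v ≠ 0) :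
    Module.finrank K ↥(S ⊓ LinearMap.ker f) + 1 = Module.finrank K S := by
  have hsurj : Function.Surjective (f.domRestrict S) := fun y =>
    ⟨(y / f v) • ⟨v, hv⟩, by simp [div_mul_cancel₀ y hfv]⟩
  have hker : (LinearMap.ker (f.domRestrict S)).map S.subtype = S ⊓ LinearMap.ker f := by
    rw [LinearMap.ker_domRestrict, Submodule.map_comap_subtype]
  rw [← LinearMap.finrank_range_add_finrank_ker (f.domRestrict S),
    LinearMap.range_eq_top.mpr hsurj, finrank_top, Module.finrank_self, ← hker,
    Submodule.finrank_map_subtype_eq, add_comm]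

end FiniteDimensional

theorem css_from_doublyEven_selfDual_general {n : ℕ} (d : ℕ) (hd : 2 ≤ d)
    (Csd : Submodule (ZMod 2) (Fin (n + 1) → ZMod 2))
    (hsd : Csd = dualCode Csd)
    (hdist : ∀ c ∈ Csd, c ≠ 0 → d ≤ hammingNorm c) :
    dualCode (Csd.map (punctureMap n)) ≤ Csd.map (punctureMap n) ∧
      Module.finrank (ZMod 2) (Csd.map (punctureMap n)) =
        Module.finrank (ZMod 2) (dualCode (Csd.map (punctureMap n))) + 1 ∧
      (∀ c ∈ Csd.map (punctureMap n), c ≠ 0 → d - 1 ≤ hammingNorm c) := by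
  have hdisj := disjoint_ker_punctureMap fun c hc hc0 => hd.trans (hdist c hc hc0)
  have hshort : dualCode (Csd.map (punctureMap n)) =
      (Csd ⊓ LinearMap.ker (LinearMap.proj (Fin.last n))).map (punctureMap n) := by
    conv_rhs => rw [hsd]
    exact dualCode_map_punctureMap Csd
  obtain ⟨v, hvC, hvlast⟩ : ∃ v ∈ Csd, v (Fin.last n) ≠ 0 := by
    by_contra! h
    rw [← single_mem_dualCode_iff, ← hsd] at h
    exact Pi.single_ne_zero_iff.mpr one_ne_zero <|
      Submodule.disjoint_def.mp hdisj _ h (funext fun i => Pi.single_eq_of_ne i.castSucc_ne_last 1)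
  refine ⟨hshort ▸ Submodule.map_mono inf_le_left, ?_, ?_⟩
  · rw [hshort, Submodule.finrank_map_eq_of_disjoint_ker hdisj,
      Submodule.finrank_map_eq_of_disjoint_ker (hdisj.mono_left inf_le_left)]
    have hcodim := Submodule.finrank_inf_ker_add_one hvC (f := LinearMap.proj (Fin.last n)) hvlast
    exact hcodim.symm
  · rintro _ ⟨v, hv, rfl⟩ hc0
    have := hdist v hv (by rintro rfl; exact hc0 (map_zero _))
    have := hammingNorm_le_hammingNorm_punctureMap_add_one v
    omega

/-- CSS construction from a doubly even self-dual code: the dual of the punctured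
code is contained in the punctured code (commuting X/Z stabilizers), the dimension
difference is one (one logical qubit), and the minimum weight of the punctured code
is at least d - 1. -/
theorem css_from_doublyEven_selfDual {n : ℕ} (d : ℕ) (hd : 2 ≤ d)
    (Csd : Submodule (ZMod 2) (Fin (n + 1) → ZMod 2))
    (hsd : Csd = dualCode Csd)
    (hde : ∀ v ∈ Csd, 4 ∣ hammingNorm v)
    (hdist : ∀ c ∈ Csd, c ≠ 0 → d ≤ hammingNorm c) :
    dualCode (Csd.map (punctureMap n)) ≤ Csd.map (punctureMap n) ∧
      Module.finrank (ZMod 2) (Csd.map (punctureMap n)) =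
        Module.finrank (ZMod 2) (dualCode (Csd.map (punctureMap n))) + 1 ∧
      (∀ c ∈ Csd.map (punctureMap n), c ≠ 0 → d - 1 ≤ hammingNorm c) :=
  css_from_doublyEven_selfDual_general d hd Csd hsd hdist
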